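/- arXiv:q-alg/9609033 — 2 statements merged into one kernel-verified Lean document; each statement's English description precedes it below -/
import Mathlib

section
/- (i) For all sites r, s : Fin L, the mixed anticommutators vanish: ã(r)a(s) + a(s)ã(r) = 0 and ã†(r)a†(s) + a†(s)ã†(r) = 0. (ii) For all sites r ≠ s : Fin L, also ã†(r)a(s) + a(s)ã†(r) = 0 and ã(r)a†(s) + a†(s)ã(r) = 0. -/
/-!
Anyonic oscillators on a one-dimensional lattice `Fin L`, built from fermionic
oscillators on the fermionic Fock space `(Fin L → Bool) →₀ ℂ` and disorder factors.
-/

noncomputable section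

/-- The fermionic Fock space on a lattice of `L` sites. -/
abbrev FSpace (L : ℕ) : Type := (Fin L → Bool) →₀ ℂ

/-- The Jordan–Wigner sign `(−1)^{#{t < r : f t = true}}`. -/
def fSign {L : ℕ} (f : Fin L → Bool) (r : Fin L) : ℂ :=
  (-1 : ℂ) ^ (Finset.univ.filter fun t => t < r ∧ f t = true).card

/-- The fermionic annihilation operator `c(r)`. -/
def cAnn {L : ℕ} (r : Fin L) : Module.End ℂ (FSpace L) :=
  Finsupp.lift (FSpace L) ℂ (Fin L → Bool) fun f =>
    if f r = true then fSign f r • Finsupp.single (Function.update f r false) (1 : ℂ) else 0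

/-- The fermionic creation operator `c†(r)`. -/
def cCre {L : ℕ} (r : Fin L) : Module.End ℂ (FSpace L) :=
  Finsupp.lift (FSpace L) ℂ (Fin L → Bool) fun f =>
    if f r = false then fSign f r • Finsupp.single (Function.update f r true) (1 : ℂ) else 0

/-- The number operator `n(r) : |f⟩ ↦ f(r)·|f⟩`. -/
def nOp {L : ℕ} (r : Fin L) : Module.End ℂ (FSpace L) :=
  Finsupp.lift (FSpace L) ℂ (Fin L → Bool) fun f =>
    (if f r = true then (1 : ℂ) else 0) • Finsupp.single f (1 : ℂ)

/-- The exponent `Σ_t ε(t−r) f(t)`, where `ε` is the sign function. -/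
def fExp {L : ℕ} (r : Fin L) (f : Fin L → Bool) : ℤ :=
  ∑ t : Fin L, Int.sign (((t : ℕ) : ℤ) - ((r : ℕ) : ℤ)) * (if f t = true then 1 else 0)

/-- The disorder operator `K⁺(r) : |f⟩ ↦ p^{Σ_t ε(t−r) f(t)} |f⟩`. -/
def Kplus {L : ℕ} (p : ℂ) (r : Fin L) : Module.End ℂ (FSpace L) :=
  Finsupp.lift (FSpace L) ℂ (Fin L → Bool) fun f =>
    (p ^ fExp r f) • Finsupp.single f (1 : ℂ)

/-- The disorder operator `K⁻(r) : |f⟩ ↦ p^{−Σ_t ε(t−r) f(t)} |f⟩`. -/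
def Kminus {L : ℕ} (p : ℂ) (r : Fin L) : Module.End ℂ (FSpace L) :=
  Finsupp.lift (FSpace L) ℂ (Fin L → Bool) fun f =>
    (p ^ (-fExp r f)) • Finsupp.single f (1 : ℂ)

/-- The anyonic oscillator `a(r) = K⁻(r) ∘ c(r)`. -/
def aAnn {L : ℕ} (p : ℂ) (r : Fin L) : Module.End ℂ (FSpace L) := Kminus p r * cAnn r

/-- The anyonic oscillator `a†(r) = K⁺(r) ∘ c†(r)`. -/
def aCre {L : ℕ} (p : ℂ) (r : Fin L) : Module.End ℂ (FSpace L) := Kplus p r * cCre r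

/-- The anyonic oscillator `ã(r) = K⁺(r) ∘ c(r)`. -/
def taAnn {L : ℕ} (p : ℂ) (r : Fin L) : Module.End ℂ (FSpace L) := Kplus p r * cAnn r

/-- The anyonic oscillator `ã†(r) = K⁻(r) ∘ c†(r)`. -/
def taCre {L : ℕ} (p : ℂ) (r : Fin L) : Module.End ℂ (FSpace L) := Kminus p r * cCre r

variable {L : ℕ}

lemma lift_single (F : (Fin L → Bool) → FSpace L) (f : Fin L → Bool) (c : ℂ) :
    Finsupp.lift (FSpace L) ℂ (Fin L → Bool) F (Finsupp.single f c) = c • F f := by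
  rw [Finsupp.lift_apply, Finsupp.sum_single_index]; simp

lemma fSign_eq_prod (f : Fin L → Bool) (r : Fin L) :
    fSign f r = ∏ t : Fin L, (if t < r ∧ f t = true then (-1 : ℂ) else 1) := by
  rw [fSign, Finset.prod_ite, Finset.prod_const, Finset.prod_const, one_pow, mul_one]

lemma fSign_update (f : Fin L → Bool) (r s : Fin L) (b : Bool) :
    fSign (Function.update f s b) r * (if s < r ∧ f s = true then (-1:ℂ) else 1) =
    fSign f r * (if s < r ∧ b = true then (-1:ℂ) else 1) := by
  rw [fSign_eq_prod, fSign_eq_prod]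
  have h1 : (fun t => if t < r ∧ (Function.update f s b) t = true then (-1 : ℂ) else 1)
      = Function.update (fun t => if t < r ∧ f t = true then (-1 : ℂ) else 1) s
        (if s < r ∧ b = true then (-1 : ℂ) else 1) := by
    funext t
    by_cases ht : t = s
    · subst ht; simp
    · simp [Function.update_of_ne ht]
  rw [h1, Finset.prod_update_of_mem (Finset.mem_univ s),
    ← Finset.mul_prod_erase Finset.univ _ (Finset.mem_univ s), Finset.erase_eq]
  ring

lemma fExp_update (r s : Fin L) (g : Fin L → Bool) (b : Bool) :
    fExp r (Function.update g s b) =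
      fExp r g + Int.sign (((s:ℕ):ℤ) - ((r:ℕ):ℤ)) *
        ((if b = true then 1 else 0) - (if g s = true then 1 else 0)) := by
  rw [fExp, fExp]
  have h1 : (fun (t : Fin L) => Int.sign (((t:ℕ):ℤ) - ((r:ℕ):ℤ)) * (if (Function.update g s b) t = true then 1 else 0))
      = Function.update (fun (t : Fin L) => Int.sign (((t:ℕ):ℤ) - ((r:ℕ):ℤ)) * (if g t = true then 1 else 0)) s
        (Int.sign (((s:ℕ):ℤ) - ((r:ℕ):ℤ)) * (if b = true then 1 else 0)) := by
    funext t
    by_cases ht : t = s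
    · subst ht; simp
    · simp [Function.update_of_ne ht]
  rw [h1, Finset.sum_update_of_mem (Finset.mem_univ s),
    ← Finset.add_sum_erase Finset.univ _ (Finset.mem_univ s), Finset.erase_eq]
  ring

lemma fSign_update_not_lt (f : Fin L → Bool) {r s : Fin L} (h : ¬ s < r) (b : Bool) :
    fSign (Function.update f s b) r = fSign f r := by
  have := fSign_update f r s b
  simpa [h] using this

lemma fSign_update_flip (f : Fin L → Bool) {r s : Fin L} (h : s < r) {b : Bool}
    (hb : b ≠ f s) :
    fSign (Function.update f s b) r = - fSign f r := by
  have := fSign_update f r s b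
  cases hfs : f s <;> cases hb2 : b <;> simp_all [hfs, hb2, h] <;>
    first
    | linear_combination this
    | linear_combination -this
    | linear_combination (2:ℂ)*this
    | linear_combination (-2:ℂ)*this

lemma sign_swap (f : Fin L → Bool) {r s : Fin L} (hrs : r ≠ s) {b b' : Bool}
    (hb : b ≠ f s) (hb' : b' ≠ f r) :
    fSign f s * fSign (Function.update f s b) r
      = - (fSign f r * fSign (Function.update f r b') s) := by
  rcases hrs.lt_or_gt with h | h
  · rw [fSign_update_not_lt f (not_lt.2 h.le) b, fSign_update_flip f h hb']
    ring
  · rw [fSign_update_flip f h hb, fSign_update_not_lt f (not_lt.2 h.le) b']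
    ring


def gOp (p : ℂ) (b : Bool) (σ : ℤ) (r : Fin L) : Module.End ℂ (FSpace L) :=
  Finsupp.lift (FSpace L) ℂ (Fin L → Bool) fun f =>
    if f r = b then (p ^ (σ * fExp r (Function.update f r (!b))) * fSign f r) •
      Finsupp.single (Function.update f r (!b)) (1:ℂ) else 0

lemma gOp_single (p : ℂ) (b : Bool) (σ : ℤ) (r : Fin L) (f : Fin L → Bool) (c : ℂ) :
    gOp p b σ r (Finsupp.single f c) = c • (if f r = b then
      (p ^ (σ * fExp r (Function.update f r (!b))) * fSign f r) •
      Finsupp.single (Function.update f r (!b)) (1:ℂ) else 0) := lift_single _ _ _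

lemma aAnn_eq (p : ℂ) (r : Fin L) : aAnn p r = gOp p true (-1) r := by
  refine Finsupp.lhom_ext fun f c => ?_
  rw [aAnn, Module.End.mul_apply, cAnn, lift_single, gOp_single]
  by_cases h : f r = true
  · rw [if_pos h, if_pos h, map_smul, map_smul, Kminus, lift_single]
    simp only [smul_smul, one_mul, one_smul, neg_one_mul, Bool.not_true, Bool.not_false]
    congr 1
    ring
  · simp [h]

lemma taAnn_eq (p : ℂ) (r : Fin L) : taAnn p r = gOp p true 1 r := by
  refine Finsupp.lhom_ext fun f c => ?_
  rw [taAnn, Module.End.mul_apply, cAnn, lift_single, gOp_single]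
  by_cases h : f r = true
  · rw [if_pos h, if_pos h, map_smul, map_smul, Kplus, lift_single]
    simp only [smul_smul, one_mul, one_smul, neg_one_mul, Bool.not_true, Bool.not_false]
    congr 1
    ring
  · simp [h]

lemma aCre_eq (p : ℂ) (r : Fin L) : aCre p r = gOp p false 1 r := by
  refine Finsupp.lhom_ext fun f c => ?_
  rw [aCre, Module.End.mul_apply, cCre, lift_single, gOp_single]
  by_cases h : f r = false
  · rw [if_pos h, if_pos h, map_smul, map_smul, Kplus, lift_single]
    simp only [smul_smul, one_mul, one_smul, neg_one_mul, Bool.not_true, Bool.not_false]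
    congr 1
    ring
  · simp [h]

lemma taCre_eq (p : ℂ) (r : Fin L) : taCre p r = gOp p false (-1) r := by
  refine Finsupp.lhom_ext fun f c => ?_
  rw [taCre, Module.End.mul_apply, cCre, lift_single, gOp_single]
  by_cases h : f r = false
  · rw [if_pos h, if_pos h, map_smul, map_smul, Kminus, lift_single]
    simp only [smul_smul, one_mul, one_smul, neg_one_mul, Bool.not_true, Bool.not_false]
    congr 1
    ring
  · simp [h]



lemma gOp_anticomm (p : ℂ) (hp : p ≠ 0) (bR bS : Bool) (σR σS : ℤ) (r s : Fin L)
    (hσ : σR * ((if (!bS) = true then (1:ℤ) else 0) - (if bS = true then 1 else 0))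
        + σS * ((if (!bR) = true then (1:ℤ) else 0) - (if bR = true then 1 else 0)) = 0)
    (hrs : r = s → bR = bS) :
    gOp p bR σR r * gOp p bS σS s + gOp p bS σS s * gOp p bR σR r = 0 := by
  refine Finsupp.lhom_ext fun f c => ?_
  rw [LinearMap.add_apply, Module.End.mul_apply, Module.End.mul_apply, gOp_single, gOp_single,
    LinearMap.zero_apply]
  by_cases hrs' : r = s
  · subst hrs'
    have hb : bR = bS := hrs rfl
    subst hb
    by_cases h : f r = bR
    · rw [if_pos h, if_pos h, map_smul, map_smul, map_smul, map_smul, gOp_single, gOp_single,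
        if_neg (by simp), if_neg (by simp)]
      simp
    · rw [if_neg h, if_neg h]
      simp
  have hf₁r : Function.update f s (!bS) r = f r := Function.update_of_ne hrs' _ _
  have hg₁s : Function.update f r (!bR) s = f s := Function.update_of_ne (Ne.symm hrs') _ _
  by_cases hs : f s = bS
  · by_cases hr : f r = bR
    · rw [if_pos hs, if_pos hr, map_smul, map_smul, map_smul, map_smul, gOp_single, gOp_single,
        if_pos (by rw [hf₁r]; exact hr), if_pos (by rw [hg₁s]; exact hs), one_smul, one_smul]
      have hcom : Function.update (Function.update f s (!bS)) r (!bR)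
          = Function.update (Function.update f r (!bR)) s (!bS) :=
        Function.update_comm (Ne.symm hrs') _ _ _
      rw [hcom]
      have hsign : fSign f s * fSign (Function.update f s (!bS)) r
          = - (fSign f r * fSign (Function.update f r (!bR)) s) := by
        refine sign_swap f hrs' ?_ ?_
        · rw [hs]; exact Bool.not_ne_self bS
        · rw [hr]; exact Bool.not_ne_self bR
      have hexp : σS * fExp s (Function.update f s (!bS))
            + σR * fExp r (Function.update (Function.update f r (!bR)) s (!bS))
          = σR * fExp r (Function.update f r (!bR))
            + σS * fExp s (Function.update (Function.update f r (!bR)) s (!bS)) := by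
        have h1 := fExp_update r s (Function.update f r (!bR)) (!bS)
        have h2 := fExp_update s r (Function.update f s (!bS)) (!bR)
        rw [hg₁s, hs] at h1
        rw [hf₁r, hr] at h2
        rw [hcom] at h2
        have hsgn : Int.sign (((r:ℕ):ℤ) - ((s:ℕ):ℤ)) = - Int.sign (((s:ℕ):ℤ) - ((r:ℕ):ℤ)) := by
          rw [show (((r:ℕ):ℤ) - ((s:ℕ):ℤ)) = -((((s:ℕ):ℤ)) - ((r:ℕ):ℤ)) by ring, Int.sign_neg]
        rw [hsgn] at h2
        rw [h1, h2]
        ring_nf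
        linear_combination (Int.sign (((s:ℕ):ℤ) - ((r:ℕ):ℤ))) * hσ
      have hpow : p ^ (σS * fExp s (Function.update f s (!bS)))
            * p ^ (σR * fExp r (Function.update (Function.update f r (!bR)) s (!bS)))
          = p ^ (σR * fExp r (Function.update f r (!bR)))
            * p ^ (σS * fExp s (Function.update (Function.update f r (!bR)) s (!bS))) := by
        rw [← zpow_add₀ hp, ← zpow_add₀ hp, hexp]
      simp only [smul_smul]
      rw [← add_smul]
      convert zero_smul ℂ (Finsupp.single (Function.update (Function.update f r (!bR)) s (!bS)) (1:ℂ))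
      linear_combination (c * (fSign f s * fSign (Function.update f s (!bS)) r)) * hpow
        + (c * (p ^ (σR * fExp r (Function.update f r (!bR)))
            * p ^ (σS * fExp s (Function.update (Function.update f r (!bR)) s (!bS))))) * hsign
    · rw [if_pos hs, if_neg hr, map_smul, map_smul, map_smul, gOp_single,
        if_neg (by rw [hf₁r]; exact hr)]
      simp
  · by_cases hr : f r = bR
    · rw [if_neg hs, if_pos hr, map_smul, map_smul, map_smul, gOp_single,
        if_neg (by rw [hg₁s]; exact hs)]
      simp
    · rw [if_neg hs, if_neg hr]
      simp


/-- mixed anticommutation relations between `a`-type and `ã`-type anyons. -/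
theorem anyon_mixed_anticommutators (L : ℕ) (hL : 1 ≤ L) (p : ℂ) (hp : p ≠ 0)
    (q : ℂ) (hq : q = p ^ 2) :
    (∀ r s : Fin L,
      taAnn p r * aAnn p s + aAnn p s * taAnn p r = 0 ∧
      taCre p r * aCre p s + aCre p s * taCre p r = 0) ∧
    (∀ r s : Fin L, r ≠ s →
      taCre p r * aAnn p s + aAnn p s * taCre p r = 0 ∧
      taAnn p r * aCre p s + aCre p s * taAnn p r = 0) := by
  constructor
  · intro r s
    constructor
    · rw [taAnn_eq, aAnn_eq]
      exact gOp_anticomm p hp true true 1 (-1) r s (by norm_num) (fun _ => rfl)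
    · rw [taCre_eq, aCre_eq]
      exact gOp_anticomm p hp false false (-1) 1 r s (by norm_num) (fun _ => rfl)
  · intro r s hne
    constructor
    · rw [taCre_eq, aAnn_eq]
      exact gOp_anticomm p hp false true (-1) (-1) r s (by norm_num) (fun h => absurd h hne)
    · rw [taAnn_eq, aCre_eq]
      exact gOp_anticomm p hp true false 1 1 r s (by norm_num) (fun h => absurd h hne)

end
end

section
/- The anyonic generators satisfy the Cartan relations of U_q(A(M−1,N−1)): for all α, β ∈ {1, …, M+N−1}, H_α H_β = H_β H_α, H_α E_β^+ − E_β^+ H_α = a_{αβ} E_β^+, and H_α E_β^− − E_β^− H_α = −a_{αβ} E_β^−, where (a_{αβ}) is the Cartan matrix of A(M−1,N−1) in the distinguished basis. -/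
/-!
Anyonic realization of `U_q(A(M−1,N−1))` on the mixed Fock space of `M` fermionic
and `N` (`q`-deformed) bosonic colours on a one-dimensional lattice `Fin L`.
-/

noncomputable section

/-- Configurations: fermionic occupations (Bool) and bosonic occupations (ℕ). -/
abbrev Cfg (M N L : ℕ) : Type := ((Fin M × Fin L) → Bool) × ((Fin N × Fin L) → ℕ)

/-- The mixed Fock space. -/
abbrev FS (M N L : ℕ) : Type := Cfg M N L →₀ ℂ

/-- The `q`-integer `[x]_q = (q^x − q^{−x})/(q − q⁻¹)`. -/
def qInt (q : ℂ) (x : ℤ) : ℂ := (q ^ x - q ^ (-x)) / (q - q⁻¹)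

/-- Lexicographic order on the fermionic modes `(i, r)`. -/
def lexLt {M L : ℕ} (x y : Fin M × Fin L) : Prop :=
  x.1 < y.1 ∨ (x.1 = y.1 ∧ x.2 < y.2)

instance {M L : ℕ} (x y : Fin M × Fin L) : Decidable (lexLt x y) := by
  unfold lexLt; infer_instance

/-- The Jordan–Wigner sign `(−1)^{#{(j,t) < (i,r) : f(j,t) = true}}`. -/
def fSgn {M L : ℕ} (f : (Fin M × Fin L) → Bool) (i : Fin M) (r : Fin L) : ℂ :=
  (-1 : ℂ) ^ (Finset.univ.filter fun jt : Fin M × Fin L => lexLt jt (i, r) ∧ f jt = true).card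

/-- The fermionic annihilation operator `c_i(r)`. -/
def cA (M N L : ℕ) (i : Fin M) (r : Fin L) : Module.End ℂ (FS M N L) :=
  Finsupp.lift (FS M N L) ℂ (Cfg M N L) fun x =>
    if x.1 (i, r) = true then
      fSgn x.1 i r • Finsupp.single (Function.update x.1 (i, r) false, x.2) (1 : ℂ)
    else 0

/-- The fermionic creation operator `c_i†(r)`. -/
def cC (M N L : ℕ) (i : Fin M) (r : Fin L) : Module.End ℂ (FS M N L) :=
  Finsupp.lift (FS M N L) ℂ (Cfg M N L) fun x =>
    if x.1 (i, r) = false then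
      fSgn x.1 i r • Finsupp.single (Function.update x.1 (i, r) true, x.2) (1 : ℂ)
    else 0

/-- The fermionic number operator `n_i(r)`. -/
def nF (M N L : ℕ) (i : Fin M) (r : Fin L) : Module.End ℂ (FS M N L) :=
  Finsupp.lift (FS M N L) ℂ (Cfg M N L) fun x =>
    (if x.1 (i, r) = true then (1 : ℂ) else 0) • Finsupp.single x (1 : ℂ)

/-- The `q`-deformed bosonic annihilation operator `b_k(r)`. -/
def bA (M N L : ℕ) (s : ℤ → ℂ) (k : Fin N) (r : Fin L) : Module.End ℂ (FS M N L) :=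
  Finsupp.lift (FS M N L) ℂ (Cfg M N L) fun x =>
    if x.2 (k, r) = 0 then 0
    else s (x.2 (k, r)) •
      Finsupp.single (x.1, Function.update x.2 (k, r) (x.2 (k, r) - 1)) (1 : ℂ)

/-- The `q`-deformed bosonic creation operator `b_k†(r)`. -/
def bC (M N L : ℕ) (s : ℤ → ℂ) (k : Fin N) (r : Fin L) : Module.End ℂ (FS M N L) :=
  Finsupp.lift (FS M N L) ℂ (Cfg M N L) fun x =>
    s ((x.2 (k, r) : ℤ) + 1) •
      Finsupp.single (x.1, Function.update x.2 (k, r) (x.2 (k, r) + 1)) (1 : ℂ)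

/-- The bosonic number operator `n'_k(r)`. -/
def nB (M N L : ℕ) (k : Fin N) (r : Fin L) : Module.End ℂ (FS M N L) :=
  Finsupp.lift (FS M N L) ℂ (Cfg M N L) fun x =>
    ((x.2 (k, r) : ℂ)) • Finsupp.single x (1 : ℂ)

/-- The fermionic disorder exponent `Σ_t ε(t−r) f(i,t)`. -/
def fEx {M N L : ℕ} (i : Fin M) (r : Fin L) (x : Cfg M N L) : ℤ :=
  ∑ t : Fin L, Int.sign (((t : ℕ) : ℤ) - ((r : ℕ) : ℤ)) * (if x.1 (i, t) = true then 1 else 0)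

/-- The bosonic disorder exponent `Σ_t ε(t−r) g(k,t)`. -/
def gEx {M N L : ℕ} (k : Fin N) (r : Fin L) (x : Cfg M N L) : ℤ :=
  ∑ t : Fin L, Int.sign (((t : ℕ) : ℤ) - ((r : ℕ) : ℤ)) * (x.2 (k, t) : ℤ)

/-- The fermionic disorder operator `F_i^σ(r) : |f,g⟩ ↦ p^{σ·Σ_t ε(t−r) f(i,t)}|f,g⟩`. -/
def Fdis (M N L : ℕ) (p : ℂ) (σ : ℤ) (i : Fin M) (r : Fin L) : Module.End ℂ (FS M N L) :=
  Finsupp.lift (FS M N L) ℂ (Cfg M N L) fun x =>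
    (p ^ (σ * fEx i r x)) • Finsupp.single x (1 : ℂ)

/-- The bosonic disorder operator `G_k^σ(r) : |f,g⟩ ↦ p^{σ·Σ_t ε(t−r) g(k,t)}|f,g⟩`. -/
def Gdis (M N L : ℕ) (p : ℂ) (σ : ℤ) (k : Fin N) (r : Fin L) : Module.End ℂ (FS M N L) :=
  Finsupp.lift (FS M N L) ℂ (Cfg M N L) fun x =>
    (p ^ (σ * gEx k r x)) • Finsupp.single x (1 : ℂ)

/-- The fermionic anyon `a_i(r) = F_i^−(r) ∘ c_i(r)`. -/
def aAny (M N L : ℕ) (p : ℂ) (i : Fin M) (r : Fin L) : Module.End ℂ (FS M N L) :=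
  Fdis M N L p (-1) i r * cA M N L i r

/-- The fermionic anyon `a_i†(r) = F_i^+(r) ∘ c_i†(r)`. -/
def aDag (M N L : ℕ) (p : ℂ) (i : Fin M) (r : Fin L) : Module.End ℂ (FS M N L) :=
  Fdis M N L p 1 i r * cC M N L i r

/-- The fermionic anyon `ã_i(r) = F_i^+(r) ∘ c_i(r)`. -/
def taAny (M N L : ℕ) (p : ℂ) (i : Fin M) (r : Fin L) : Module.End ℂ (FS M N L) :=
  Fdis M N L p 1 i r * cA M N L i r

/-- The fermionic anyon `ã_i†(r) = F_i^−(r) ∘ c_i†(r)`. -/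
def taDag (M N L : ℕ) (p : ℂ) (i : Fin M) (r : Fin L) : Module.End ℂ (FS M N L) :=
  Fdis M N L p (-1) i r * cC M N L i r

/-- The bosonic anyon `A_k(r) = G_k^+(r) ∘ b_k(r)`. -/
def AAny (M N L : ℕ) (p : ℂ) (s : ℤ → ℂ) (k : Fin N) (r : Fin L) : Module.End ℂ (FS M N L) :=
  Gdis M N L p 1 k r * bA M N L s k r

/-- The bosonic anyon `A_k†(r) = G_k^−(r) ∘ b_k†(r)`. -/
def ADag (M N L : ℕ) (p : ℂ) (s : ℤ → ℂ) (k : Fin N) (r : Fin L) : Module.End ℂ (FS M N L) :=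
  Gdis M N L p (-1) k r * bC M N L s k r

/-- The bosonic anyon `Ã_k(r) = G_k^−(r) ∘ b_k(r)`. -/
def tAAny (M N L : ℕ) (p : ℂ) (s : ℤ → ℂ) (k : Fin N) (r : Fin L) : Module.End ℂ (FS M N L) :=
  Gdis M N L p (-1) k r * bA M N L s k r

/-- The bosonic anyon `Ã_k†(r) = G_k^+(r) ∘ b_k†(r)`. -/
def tADag (M N L : ℕ) (p : ℂ) (s : ℤ → ℂ) (k : Fin N) (r : Fin L) : Module.End ℂ (FS M N L) :=
  Gdis M N L p 1 k r * bC M N L s k r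

/-- The Cartan generator `H_α` (labels `α = 1, …, M+N−1`). -/
def Hg (M N L : ℕ) (α : ℕ) : Module.End ℂ (FS M N L) :=
  if h : 1 ≤ α ∧ α < M then
    ∑ r : Fin L, (nF M N L ⟨α - 1, by omega⟩ r - nF M N L ⟨α, by omega⟩ r)
  else if h : α = M ∧ 1 ≤ M ∧ 1 ≤ N then
    ∑ r : Fin L, (nF M N L ⟨M - 1, by omega⟩ r + nB M N L ⟨0, by omega⟩ r)
  else if h : M < α ∧ α ≤ M + N - 1 then
    ∑ r : Fin L, (nB M N L ⟨α - M - 1, by omega⟩ r - nB M N L ⟨α - M, by omega⟩ r)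
  else 0

/-- The raising generator `E_α^+` (labels `α = 1, …, M+N−1`). -/
def Ep (M N L : ℕ) (p : ℂ) (s : ℤ → ℂ) (α : ℕ) : Module.End ℂ (FS M N L) :=
  if h : 1 ≤ α ∧ α < M then
    ∑ r : Fin L, aDag M N L p ⟨α - 1, by omega⟩ r * aAny M N L p ⟨α, by omega⟩ r
  else if h : α = M ∧ 1 ≤ M ∧ 1 ≤ N then
    ∑ r : Fin L, aDag M N L p ⟨M - 1, by omega⟩ r * AAny M N L p s ⟨0, by omega⟩ r
  else if h : M < α ∧ α ≤ M + N - 1 then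
    ∑ r : Fin L, ADag M N L p s ⟨α - M - 1, by omega⟩ r * AAny M N L p s ⟨α - M, by omega⟩ r
  else 0

/-- The lowering generator `E_α^−` (labels `α = 1, …, M+N−1`). -/
def Em (M N L : ℕ) (p : ℂ) (s : ℤ → ℂ) (α : ℕ) : Module.End ℂ (FS M N L) :=
  if h : 1 ≤ α ∧ α < M then
    ∑ r : Fin L, taDag M N L p ⟨α, by omega⟩ r * taAny M N L p ⟨α - 1, by omega⟩ r
  else if h : α = M ∧ 1 ≤ M ∧ 1 ≤ N then
    ∑ r : Fin L, tADag M N L p s ⟨0, by omega⟩ r * taAny M N L p ⟨M - 1, by omega⟩ r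
  else if h : M < α ∧ α ≤ M + N - 1 then
    ∑ r : Fin L, tADag M N L p s ⟨α - M, by omega⟩ r * tAAny M N L p s ⟨α - M - 1, by omega⟩ r
  else 0

/-- The Cartan matrix of `A(M−1,N−1)` in the distinguished basis
(one-based labels `α, β ∈ {1, …, M+N−1}`). -/
def cartan (M : ℕ) (α β : ℕ) : ℤ :=
  if α = β then (if α = M then 0 else 2)
  else if β = α + 1 then (if α = M then 1 else -1)
  else if α = β + 1 then -1
  else 0


section Machinery
variable {M N L : ℕ}

lemma lift_single' (h : Cfg M N L → FS M N L) (x : Cfg M N L) (c : ℂ) :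
    (Finsupp.lift (FS M N L) ℂ (Cfg M N L) h) (Finsupp.single x c) = c • h x := by
  simp [Finsupp.lift_apply, Finsupp.sum_single_index]

/-- `D` is diagonal with eigenvalue function `w`. -/
def diagW (D : Module.End ℂ (FS M N L)) (w : Cfg M N L → ℂ) : Prop :=
  ∀ x, D (Finsupp.single x 1) = w x • Finsupp.single x 1

lemma end_ext {D E : Module.End ℂ (FS M N L)}
    (h : ∀ x, D (Finsupp.single x 1) = E (Finsupp.single x 1)) : D = E := by
  apply Finsupp.lhom_ext
  intro a b
  have hb : (Finsupp.single a b : FS M N L) = b • Finsupp.single a 1 := by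
    simp [Finsupp.smul_single]
  rw [hb, map_smul, map_smul, h]

lemma diag_comm {D E : Module.End ℂ (FS M N L)} {w v : Cfg M N L → ℂ}
    (hD : diagW D w) (hE : diagW E v) : D * E = E * D := by
  apply end_ext; intro x
  rw [Module.End.mul_apply, Module.End.mul_apply, hD x, hE x, map_smul, map_smul, hD x, hE x,
    smul_smul, smul_smul, mul_comm]

lemma diag_shift {D T : Module.End ℂ (FS M N L)} {w : Cfg M N L → ℂ}
    (hD : diagW D w) (a : ℂ)
    (hT : ∀ x, T (Finsupp.single x 1) = 0 ∨
      ∃ y, w y = w x + a ∧ ∃ c : ℂ, T (Finsupp.single x 1) = c • Finsupp.single y 1) :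
    D * T - T * D = a • T := by
  apply end_ext; intro x
  rcases hT x with h | ⟨y, hw, c, hTy⟩
  · simp only [LinearMap.sub_apply, Module.End.mul_apply, LinearMap.smul_apply, hD x, map_smul,
      h, smul_zero, map_zero, sub_zero]
  · simp only [LinearMap.sub_apply, Module.End.mul_apply, LinearMap.smul_apply, hTy, hD x,
      map_smul, hD y, smul_smul, hw]
    rw [← sub_smul]
    congr 1
    ring

lemma shift_sum {ι : Type*} {D : Module.End ℂ (FS M N L)} (S : Finset ι)
    (T : ι → Module.End ℂ (FS M N L)) (a : ℂ)
    (h : ∀ r ∈ S, D * T r - T r * D = a • T r) :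
    D * (∑ r ∈ S, T r) - (∑ r ∈ S, T r) * D = a • ∑ r ∈ S, T r := by
  have h2 : ∑ r ∈ S, (D * T r - T r * D) = D * (∑ r ∈ S, T r) - (∑ r ∈ S, T r) * D := by
    simp only [Finset.mul_sum, Finset.sum_mul]
    exact Finset.sum_sub_distrib (f := fun r => D * T r) (g := fun r => T r * D)
  rw [← h2, Finset.smul_sum]
  exact Finset.sum_congr rfl h

end Machinery

section Weights
variable {M N L : ℕ}

/-- Total fermion number of colour `i`. -/
def cntF (i : Fin M) (x : Cfg M N L) : ℂ :=
  ∑ r : Fin L, (if x.1 (i, r) = true then 1 else 0)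

/-- Total boson number of colour `k`. -/
def cntB (k : Fin N) (x : Cfg M N L) : ℂ :=
  ∑ r : Fin L, (x.2 (k, r) : ℂ)

/-- The eigenvalue of `Hg α` on a configuration. -/
def wH (M N L : ℕ) (α : ℕ) (x : Cfg M N L) : ℂ :=
  if h : 1 ≤ α ∧ α < M then cntF ⟨α - 1, by omega⟩ x - cntF ⟨α, by omega⟩ x
  else if h : α = M ∧ 1 ≤ M ∧ 1 ≤ N then cntF ⟨M - 1, by omega⟩ x + cntB ⟨0, by omega⟩ x
  else if h : M < α ∧ α ≤ M + N - 1 then cntB ⟨α - M - 1, by omega⟩ x - cntB ⟨α - M, by omega⟩ x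
  else 0

lemma nF_single (i : Fin M) (r : Fin L) (x : Cfg M N L) :
    nF M N L i r (Finsupp.single x 1)
      = (if x.1 (i, r) = true then (1 : ℂ) else 0) • Finsupp.single x 1 := by
  rw [nF, lift_single', one_smul]

lemma nB_single (k : Fin N) (r : Fin L) (x : Cfg M N L) :
    nB M N L k r (Finsupp.single x 1) = ((x.2 (k, r) : ℂ)) • Finsupp.single x 1 := by
  rw [nB, lift_single', one_smul]

lemma Hg_diag (α : ℕ) : diagW (Hg M N L α) (wH M N L α) := by
  intro x
  rw [Hg, wH]
  split_ifs with h1 h2 h3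
  · rw [LinearMap.sum_apply]
    simp only [LinearMap.sub_apply, nF_single]
    simp only [← sub_smul]
    rw [← Finset.sum_smul]
    congr 1
    rw [cntF, cntF, Finset.sum_sub_distrib]
  · rw [LinearMap.sum_apply]
    simp only [LinearMap.add_apply, nF_single, nB_single]
    simp only [← add_smul]
    rw [← Finset.sum_smul]
    congr 1
    rw [cntF, cntB, Finset.sum_add_distrib]
  · rw [LinearMap.sum_apply]
    simp only [LinearMap.sub_apply, nB_single]
    simp only [← sub_smul]
    rw [← Finset.sum_smul]
    congr 1
    rw [cntB, cntB, Finset.sum_sub_distrib]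
  · simp

end Weights

section Counts
variable {M N L : ℕ}

lemma cntF_update (f : (Fin M × Fin L) → Bool) (g : (Fin N × Fin L) → ℕ)
    (i : Fin M) (r : Fin L) (v : Bool) (c : Fin M) :
    cntF c ((Function.update f (i, r) v, g) : Cfg M N L)
      = cntF c ((f, g) : Cfg M N L)
        + (if c = i then ((if v = true then (1 : ℂ) else 0)
            - (if f (i, r) = true then 1 else 0)) else 0) := by
  rw [cntF, cntF]
  have key : ∀ r' : Fin L,
      (if (Function.update f (i, r) v) (c, r') = true then (1 : ℂ) else 0)
        = (if f (c, r') = true then 1 else 0)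
          + (if r' = r then (if c = i then ((if v = true then (1 : ℂ) else 0)
              - (if f (i, r) = true then 1 else 0)) else 0) else 0) := by
    intro r'
    by_cases hr : r' = r
    · subst hr
      by_cases hc : c = i
      · subst hc
        rw [Function.update_self]
        simp only [if_pos rfl, if_true]
        ring
      · rw [Function.update_of_ne (by simp [hc])]
        simp [hc]
    · rw [Function.update_of_ne (by simp [hr])]
      simp [hr]
  rw [Finset.sum_congr rfl (fun r' _ => key r'), Finset.sum_add_distrib,
    Finset.sum_ite_eq' Finset.univ r, if_pos (Finset.mem_univ r)]

lemma cntB_update (f : (Fin M × Fin L) → Bool) (g : (Fin N × Fin L) → ℕ)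
    (k : Fin N) (r : Fin L) (m : ℕ) (c : Fin N) :
    cntB c ((f, Function.update g (k, r) m) : Cfg M N L)
      = cntB c ((f, g) : Cfg M N L)
        + (if c = k then ((m : ℂ) - (g (k, r) : ℂ)) else 0) := by
  rw [cntB, cntB]
  have key : ∀ r' : Fin L,
      (((Function.update g (k, r) m) (c, r') : ℂ))
        = (g (c, r') : ℂ)
          + (if r' = r then (if c = k then ((m : ℂ) - (g (k, r) : ℂ)) else 0) else 0) := by
    intro r'
    by_cases hr : r' = r
    · subst hr
      by_cases hc : c = k
      · subst hc
        rw [Function.update_self]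
        simp
      · rw [Function.update_of_ne (by simp [hc])]
        simp [hc]
    · rw [Function.update_of_ne (by simp [hr])]
      simp [hr]
  rw [Finset.sum_congr rfl (fun r' _ => key r'), Finset.sum_add_distrib,
    Finset.sum_ite_eq' Finset.univ r, if_pos (Finset.mem_univ r)]

lemma cntF_pair (c : Fin M) (x : Cfg M N L) (g : (Fin N × Fin L) → ℕ) :
    cntF c ((x.1, g) : Cfg M N L) = cntF c x := rfl

lemma cntB_pair (c : Fin N) (x : Cfg M N L) (f : (Fin M × Fin L) → Bool) :
    cntB c ((f, x.2) : Cfg M N L) = cntB c x := rfl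

end Counts

section Moves
variable {M N L : ℕ}

set_option maxHeartbeats 2000000 in
lemma wH_EpFerm (hM : 1 ≤ M) (hN : 1 ≤ N) (α β : ℕ) (hα1 : 1 ≤ α) (hα2 : α ≤ M + N - 1)
    (hβ1 : 1 ≤ β) (hβ2 : β < M) (x : Cfg M N L) (r : Fin L)
    (h1 : x.1 (⟨β, hβ2⟩, r) = true) (h2 : x.1 (⟨β - 1, by omega⟩, r) = false) :
    wH M N L α ((Function.update (Function.update x.1 (⟨β, hβ2⟩, r) false)
        (⟨β - 1, by omega⟩, r) true, x.2) : Cfg M N L)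
      = wH M N L α x + (cartan M α β : ℂ) := by
  have h2' : (Function.update x.1 (⟨β, hβ2⟩, r) false) ((⟨β - 1, by omega⟩ : Fin M), r)
      = false := by
    have hne : ((⟨β - 1, by omega⟩ : Fin M), r) ≠ ((⟨β, hβ2⟩ : Fin M), r) := by
      simp only [ne_eq, Prod.mk.injEq, Fin.mk.injEq]
      rintro ⟨h, -⟩
      omega
    rw [Function.update_of_ne hne]
    exact h2
  rw [wH, wH]
  split_ifs with k1 k2 k3
  · simp only [cntF_update, cntB_update, cntF_pair, cntB_pair, h1, h2', Prod.mk.eta]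
    simp only [cartan, Fin.mk.injEq]
    split_ifs <;> first | (push_cast; ring1) | (exact ‹False›.elim) | (exact (‹¬True› trivial).elim) | (exfalso; omega)
  · simp only [cntF_update, cntB_update, cntF_pair, cntB_pair, h1, h2', Prod.mk.eta]
    simp only [cartan, Fin.mk.injEq]
    split_ifs <;> first | (push_cast; ring1) | (exact ‹False›.elim) | (exact (‹¬True› trivial).elim) | (exfalso; omega)
  · simp only [cntF_update, cntB_update, cntF_pair, cntB_pair, Prod.mk.eta]
    simp only [cartan, Fin.mk.injEq]
    split_ifs <;> first | (push_cast; ring1) | (exact ‹False›.elim) | (exact (‹¬True› trivial).elim) | (exfalso; omega)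
  · omega

set_option maxHeartbeats 2000000 in
lemma wH_EmFerm (hM : 1 ≤ M) (hN : 1 ≤ N) (α β : ℕ) (hα1 : 1 ≤ α) (hα2 : α ≤ M + N - 1)
    (hβ1 : 1 ≤ β) (hβ2 : β < M) (x : Cfg M N L) (r : Fin L)
    (h1 : x.1 (⟨β - 1, by omega⟩, r) = true) (h2 : x.1 (⟨β, hβ2⟩, r) = false) :
    wH M N L α ((Function.update (Function.update x.1 (⟨β - 1, by omega⟩, r) false)
        (⟨β, hβ2⟩, r) true, x.2) : Cfg M N L)
      = wH M N L α x + (-(cartan M α β : ℂ)) := by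
  have h2' : (Function.update x.1 (⟨β - 1, by omega⟩, r) false) ((⟨β, hβ2⟩ : Fin M), r)
      = false := by
    have hne : ((⟨β, hβ2⟩ : Fin M), r) ≠ ((⟨β - 1, by omega⟩ : Fin M), r) := by
      simp only [ne_eq, Prod.mk.injEq, Fin.mk.injEq]
      rintro ⟨h, -⟩
      omega
    rw [Function.update_of_ne hne]
    exact h2
  rw [wH, wH]
  split_ifs with k1 k2 k3
  · simp only [cntF_update, cntB_update, cntF_pair, cntB_pair, h1, h2', Prod.mk.eta]
    simp only [cartan, Fin.mk.injEq]
    split_ifs <;> first | (push_cast; ring1) | (exact ‹False›.elim) | (exact (‹¬True› trivial).elim) | (exfalso; omega)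
  · simp only [cntF_update, cntB_update, cntF_pair, cntB_pair, h1, h2', Prod.mk.eta]
    simp only [cartan, Fin.mk.injEq]
    split_ifs <;> first | (push_cast; ring1) | (exact ‹False›.elim) | (exact (‹¬True› trivial).elim) | (exfalso; omega)
  · simp only [cntF_update, cntB_update, cntF_pair, cntB_pair, Prod.mk.eta]
    simp only [cartan, Fin.mk.injEq]
    split_ifs <;> first | (push_cast; ring1) | (exact ‹False›.elim) | (exact (‹¬True› trivial).elim) | (exfalso; omega)
  · omega

set_option maxHeartbeats 2000000 in
lemma wH_EpMix (hM : 1 ≤ M) (hN : 1 ≤ N) (α : ℕ) (hα1 : 1 ≤ α) (hα2 : α ≤ M + N - 1)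
    (x : Cfg M N L) (r : Fin L)
    (h1 : x.2 ((⟨0, by omega⟩ : Fin N), r) ≠ 0) (h2 : x.1 (⟨M - 1, by omega⟩, r) = false) :
    wH M N L α ((Function.update x.1 (⟨M - 1, by omega⟩, r) true,
        Function.update x.2 (⟨0, by omega⟩, r) (x.2 ((⟨0, by omega⟩ : Fin N), r) - 1)) : Cfg M N L)
      = wH M N L α x + (cartan M α M : ℂ) := by
  have hc : ((x.2 ((⟨0, by omega⟩ : Fin N), r) - 1 : ℕ) : ℂ)
      = ((x.2 ((⟨0, by omega⟩ : Fin N), r) : ℕ) : ℂ) - 1 := by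
    rw [Nat.cast_sub (Nat.one_le_iff_ne_zero.mpr h1)]
    norm_num
  rw [wH, wH]
  split_ifs with k1 k2 k3
  · simp only [cntF_update, cntB_update, cntF_pair, cntB_pair, h2, hc, Nat.cast_add, Nat.cast_one, Prod.mk.eta]
    simp only [cartan, Fin.mk.injEq]
    split_ifs <;> first | (push_cast; ring1) | (exact ‹False›.elim) | (exact (‹¬True› trivial).elim) | (exfalso; omega)
  · simp only [cntF_update, cntB_update, cntF_pair, cntB_pair, h2, hc, Nat.cast_add, Nat.cast_one, Prod.mk.eta]
    simp only [cartan, Fin.mk.injEq]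
    split_ifs <;> first | (push_cast; ring1) | (exact ‹False›.elim) | (exact (‹¬True› trivial).elim) | (exfalso; omega)
  · simp only [cntF_update, cntB_update, cntF_pair, cntB_pair, h2, hc, Nat.cast_add, Nat.cast_one, Prod.mk.eta]
    simp only [cartan, Fin.mk.injEq]
    split_ifs <;> first | (push_cast; ring1) | (exact ‹False›.elim) | (exact (‹¬True› trivial).elim) | (exfalso; omega)
  · omega

set_option maxHeartbeats 2000000 in
lemma wH_EmMix (hM : 1 ≤ M) (hN : 1 ≤ N) (α : ℕ) (hα1 : 1 ≤ α) (hα2 : α ≤ M + N - 1)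
    (x : Cfg M N L) (r : Fin L)
    (h1 : x.1 (⟨M - 1, by omega⟩, r) = true) :
    wH M N L α ((Function.update x.1 (⟨M - 1, by omega⟩, r) false,
        Function.update x.2 ((⟨0, by omega⟩ : Fin N), r)
          (x.2 ((⟨0, by omega⟩ : Fin N), r) + 1)) : Cfg M N L)
      = wH M N L α x + (-(cartan M α M : ℂ)) := by
  rw [wH, wH]
  split_ifs with k1 k2 k3
  · simp only [cntF_update, cntB_update, cntF_pair, cntB_pair, h1, Nat.cast_add, Nat.cast_one, Prod.mk.eta]
    simp only [cartan, Fin.mk.injEq]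
    split_ifs <;> first | (push_cast; ring1) | (exact ‹False›.elim) | (exact (‹¬True› trivial).elim) | (exfalso; omega)
  · simp only [cntF_update, cntB_update, cntF_pair, cntB_pair, h1, Nat.cast_add, Nat.cast_one, Prod.mk.eta]
    simp only [cartan, Fin.mk.injEq]
    split_ifs <;> first | (push_cast; ring1) | (exact ‹False›.elim) | (exact (‹¬True› trivial).elim) | (exfalso; omega)
  · simp only [cntF_update, cntB_update, cntF_pair, cntB_pair, h1, Nat.cast_add, Nat.cast_one, Prod.mk.eta]
    simp only [cartan, Fin.mk.injEq]
    split_ifs <;> first | (push_cast; ring1) | (exact ‹False›.elim) | (exact (‹¬True› trivial).elim) | (exfalso; omega)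
  · omega

set_option maxHeartbeats 2000000 in
lemma wH_EpBos (hM : 1 ≤ M) (hN : 1 ≤ N) (α β : ℕ) (hα1 : 1 ≤ α) (hα2 : α ≤ M + N - 1)
    (hβ1 : M < β) (hβ2 : β ≤ M + N - 1) (x : Cfg M N L) (r : Fin L)
    (h1 : x.2 ((⟨β - M, by omega⟩ : Fin N), r) ≠ 0) :
    wH M N L α ((x.1,
        Function.update
          (Function.update x.2 ((⟨β - M, by omega⟩ : Fin N), r)
            (x.2 ((⟨β - M, by omega⟩ : Fin N), r) - 1))
          ((⟨β - M - 1, by omega⟩ : Fin N), r)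
          ((Function.update x.2 ((⟨β - M, by omega⟩ : Fin N), r)
            (x.2 ((⟨β - M, by omega⟩ : Fin N), r) - 1)) ((⟨β - M - 1, by omega⟩ : Fin N), r)
              + 1)) : Cfg M N L)
      = wH M N L α x + (cartan M α β : ℂ) := by
  have hc : ((x.2 ((⟨β - M, by omega⟩ : Fin N), r) - 1 : ℕ) : ℂ)
      = ((x.2 ((⟨β - M, by omega⟩ : Fin N), r) : ℕ) : ℂ) - 1 := by
    rw [Nat.cast_sub (Nat.one_le_iff_ne_zero.mpr h1)]
    norm_num
  unfold wH
  split_ifs with k1 k2 k3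
  · simp only [cntF_pair]
    simp only [cartan, Fin.mk.injEq]
    split_ifs <;> first | (push_cast; ring1) | (exact ‹False›.elim) | (exact (‹¬True› trivial).elim) | (exfalso; omega)
  · simp only [cntF_pair, cntB_update, hc, Nat.cast_add, Nat.cast_one, Prod.mk.eta]
    simp only [cartan, Fin.mk.injEq]
    split_ifs <;> first | (push_cast; ring1) | (exact ‹False›.elim) | (exact (‹¬True› trivial).elim) | (exfalso; omega)
  · simp only [cntB_update, hc, Nat.cast_add, Nat.cast_one, Prod.mk.eta]
    simp only [cartan, Fin.mk.injEq]
    split_ifs <;> first | (push_cast; ring1) | (exact ‹False›.elim) | (exact (‹¬True› trivial).elim) | (exfalso; omega)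
  · omega

set_option maxHeartbeats 2000000 in
lemma wH_EmBos (hM : 1 ≤ M) (hN : 1 ≤ N) (α β : ℕ) (hα1 : 1 ≤ α) (hα2 : α ≤ M + N - 1)
    (hβ1 : M < β) (hβ2 : β ≤ M + N - 1) (x : Cfg M N L) (r : Fin L)
    (h1 : x.2 ((⟨β - M - 1, by omega⟩ : Fin N), r) ≠ 0) :
    wH M N L α ((x.1,
        Function.update
          (Function.update x.2 ((⟨β - M - 1, by omega⟩ : Fin N), r)
            (x.2 ((⟨β - M - 1, by omega⟩ : Fin N), r) - 1))
          ((⟨β - M, by omega⟩ : Fin N), r)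
          ((Function.update x.2 ((⟨β - M - 1, by omega⟩ : Fin N), r)
            (x.2 ((⟨β - M - 1, by omega⟩ : Fin N), r) - 1)) ((⟨β - M, by omega⟩ : Fin N), r)
              + 1)) : Cfg M N L)
      = wH M N L α x + (-(cartan M α β : ℂ)) := by
  have hc : ((x.2 ((⟨β - M - 1, by omega⟩ : Fin N), r) - 1 : ℕ) : ℂ)
      = ((x.2 ((⟨β - M - 1, by omega⟩ : Fin N), r) : ℕ) : ℂ) - 1 := by
    rw [Nat.cast_sub (Nat.one_le_iff_ne_zero.mpr h1)]
    norm_num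
  unfold wH
  split_ifs with k1 k2 k3
  · simp only [cntF_pair]
    simp only [cartan, Fin.mk.injEq]
    split_ifs <;> first | (push_cast; ring1) | (exact ‹False›.elim) | (exact (‹¬True› trivial).elim) | (exfalso; omega)
  · simp only [cntF_pair, cntB_update, hc, Nat.cast_add, Nat.cast_one, Prod.mk.eta]
    simp only [cartan, Fin.mk.injEq]
    split_ifs <;> first | (push_cast; ring1) | (exact ‹False›.elim) | (exact (‹¬True› trivial).elim) | (exfalso; omega)
  · simp only [cntB_update, hc, Nat.cast_add, Nat.cast_one, Prod.mk.eta]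
    simp only [cartan, Fin.mk.injEq]
    split_ifs <;> first | (push_cast; ring1) | (exact ‹False›.elim) | (exact (‹¬True› trivial).elim) | (exfalso; omega)
  · omega


end Moves

section Main
variable {M N L : ℕ}

set_option maxHeartbeats 2000000 in
/-- the anyonic generators satisfy the Cartan relations of
`U_q(A(M−1,N−1))`. -/
theorem anyonic_cartan_relations
    (M N L : ℕ) (hM : 1 ≤ M) (hN : 1 ≤ N) (hMN : 3 ≤ M + N) (hL : 1 ≤ L)
    (p : ℂ) (hp : p ≠ 0) (hp4 : p ^ 4 ≠ 1) (q : ℂ) (hq : q = p ^ 2)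
    (s : ℤ → ℂ) (hs : ∀ n : ℤ, s n ^ 2 = qInt q n) :
    ∀ α β : ℕ, 1 ≤ α → α ≤ M + N - 1 → 1 ≤ β → β ≤ M + N - 1 →
      Hg M N L α * Hg M N L β = Hg M N L β * Hg M N L α ∧
      Hg M N L α * Ep M N L p s β - Ep M N L p s β * Hg M N L α
        = ((cartan M α β : ℂ)) • Ep M N L p s β ∧
      Hg M N L α * Em M N L p s β - Em M N L p s β * Hg M N L α
        = (-(cartan M α β : ℂ)) • Em M N L p s β := by
  intro α β hα1 hα2 hβ1 hβ2
  refine ⟨diag_comm (Hg_diag α) (Hg_diag β), ?_, ?_⟩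
  · -- the `E⁺` relation
    rw [Ep]
    split_ifs with hb1 hb2 hb3
    · -- fermionic β
      refine shift_sum Finset.univ _ _ (fun r _ => diag_shift (Hg_diag α) _ (fun x => ?_))
      by_cases h1 : x.1 (⟨β, by omega⟩, r) = true
      · by_cases h2 : x.1 (⟨β - 1, by omega⟩, r) = false
        · have hne : ((⟨β - 1, by omega⟩ : Fin M), r) ≠ ((⟨β, by omega⟩ : Fin M), r) := by
            simp only [ne_eq, Prod.mk.injEq, Fin.mk.injEq]
            rintro ⟨h, -⟩
            omega
          have h2' : (Function.update x.1 ((⟨β, by omega⟩ : Fin M), r) false)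
              ((⟨β - 1, by omega⟩ : Fin M), r) = false := by
            rw [Function.update_of_ne hne]; exact h2
          refine Or.inr ⟨(Function.update (Function.update x.1 ((⟨β, by omega⟩ : Fin M), r)
              false) ((⟨β - 1, by omega⟩ : Fin M), r) true, x.2),
            wH_EpFerm hM hN α β hα1 hα2 hb1.1 hb1.2 x r h1 h2, ?_⟩
          simp only [Module.End.mul_apply, aDag, aAny, Fdis, cA, cC, lift_single', h1, h2', one_smul, map_smul, smul_smul, map_zero, smul_zero, if_true, if_false, eq_self_iff_true, Bool.true_eq_false, Bool.false_eq_true]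
          exact ⟨_, rfl⟩
        · refine Or.inl ?_
          simp only [Bool.not_eq_false] at h2
          have h2' : (Function.update x.1 ((⟨β, by omega⟩ : Fin M), r) false)
              ((⟨β - 1, by omega⟩ : Fin M), r) = true := by
            rw [Function.update_of_ne (by simp only [ne_eq, Prod.mk.injEq, Fin.mk.injEq]; rintro ⟨h, -⟩; omega)]
            exact h2
          simp only [Module.End.mul_apply, aDag, aAny, Fdis, cA, cC, lift_single', h1, h2', one_smul, map_smul, smul_smul, map_zero, smul_zero, if_true, if_false, eq_self_iff_true, Bool.true_eq_false, Bool.false_eq_true]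
      · refine Or.inl ?_
        simp only [Module.End.mul_apply, aDag, aAny, Fdis, cA, cC, lift_single', h1, one_smul, map_smul, smul_smul, map_zero, smul_zero, if_true, if_false, eq_self_iff_true, Bool.true_eq_false, Bool.false_eq_true]
    · -- mixed β = M
      have hcar : ((cartan M α β : ℤ) : ℂ) = ((cartan M α M : ℤ) : ℂ) := by rw [hb2.1]
      rw [hcar]
      refine shift_sum Finset.univ _ _ (fun r _ => diag_shift (Hg_diag α) _ (fun x => ?_))
      by_cases h1 : x.2 ((⟨0, by omega⟩ : Fin N), r) = 0
      · refine Or.inl ?_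
        simp only [Module.End.mul_apply, aDag, AAny, Fdis, Gdis, cC, bA, lift_single', h1, one_smul, map_smul, smul_smul, map_zero, smul_zero, if_true, if_false, eq_self_iff_true, Bool.true_eq_false, Bool.false_eq_true]
      · by_cases h2 : x.1 (⟨M - 1, by omega⟩, r) = false
        · refine Or.inr ⟨(Function.update x.1 ((⟨M - 1, by omega⟩ : Fin M), r) true,
            Function.update x.2 ((⟨0, by omega⟩ : Fin N), r)
              (x.2 ((⟨0, by omega⟩ : Fin N), r) - 1)),
            wH_EpMix hM hN α hα1 hα2 x r h1 h2, ?_⟩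
          simp only [Module.End.mul_apply, aDag, AAny, Fdis, Gdis, cC, bA, lift_single', h1, h2, one_smul, map_smul, smul_smul, map_zero, smul_zero, if_true, if_false, eq_self_iff_true, Bool.true_eq_false, Bool.false_eq_true]
          exact ⟨_, rfl⟩
        · refine Or.inl ?_
          simp only [Module.End.mul_apply, aDag, AAny, Fdis, Gdis, cC, bA, lift_single', h1, h2, one_smul, map_smul, smul_smul, map_zero, smul_zero, if_true, if_false, eq_self_iff_true, Bool.true_eq_false, Bool.false_eq_true]
    · -- bosonic β
      refine shift_sum Finset.univ _ _ (fun r _ => diag_shift (Hg_diag α) _ (fun x => ?_))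
      by_cases h1 : x.2 ((⟨β - M, by omega⟩ : Fin N), r) = 0
      · refine Or.inl ?_
        simp only [Module.End.mul_apply, ADag, AAny, Gdis, bA, bC, lift_single', h1, one_smul, map_smul, smul_smul, map_zero, smul_zero, if_true, if_false, eq_self_iff_true, Bool.true_eq_false, Bool.false_eq_true]
      · refine Or.inr ⟨(x.1,
          Function.update
            (Function.update x.2 ((⟨β - M, by omega⟩ : Fin N), r)
              (x.2 ((⟨β - M, by omega⟩ : Fin N), r) - 1))
            ((⟨β - M - 1, by omega⟩ : Fin N), r)
            ((Function.update x.2 ((⟨β - M, by omega⟩ : Fin N), r)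
              (x.2 ((⟨β - M, by omega⟩ : Fin N), r) - 1)) ((⟨β - M - 1, by omega⟩ : Fin N), r)
                + 1)),
          wH_EpBos hM hN α β hα1 hα2 hb3.1 hb3.2 x r h1, ?_⟩
        simp only [Module.End.mul_apply, ADag, AAny, Gdis, bA, bC, lift_single', h1, one_smul, map_smul, smul_smul, map_zero, smul_zero, if_true, if_false, eq_self_iff_true, Bool.true_eq_false, Bool.false_eq_true]
        exact ⟨_, rfl⟩
    · exfalso; omega
  · -- the `E⁻` relation
    rw [Em]
    split_ifs with hb1 hb2 hb3
    · -- fermionic β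
      refine shift_sum Finset.univ _ _ (fun r _ => diag_shift (Hg_diag α) _ (fun x => ?_))
      by_cases h1 : x.1 (⟨β - 1, by omega⟩, r) = true
      · by_cases h2 : x.1 (⟨β, by omega⟩, r) = false
        · have h2' : (Function.update x.1 ((⟨β - 1, by omega⟩ : Fin M), r) false)
              ((⟨β, by omega⟩ : Fin M), r) = false := by
            rw [Function.update_of_ne (by simp only [ne_eq, Prod.mk.injEq, Fin.mk.injEq]; rintro ⟨h, -⟩; omega)]
            exact h2
          refine Or.inr ⟨(Function.update (Function.update x.1 ((⟨β - 1, by omega⟩ : Fin M), r)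
              false) ((⟨β, by omega⟩ : Fin M), r) true, x.2),
            wH_EmFerm hM hN α β hα1 hα2 hb1.1 hb1.2 x r h1 h2, ?_⟩
          simp only [Module.End.mul_apply, taDag, taAny, Fdis, cA, cC, lift_single', h1, h2', one_smul, map_smul, smul_smul, map_zero, smul_zero, if_true, if_false, eq_self_iff_true, Bool.true_eq_false, Bool.false_eq_true]
          exact ⟨_, rfl⟩
        · refine Or.inl ?_
          simp only [Bool.not_eq_false] at h2
          have h2' : (Function.update x.1 ((⟨β - 1, by omega⟩ : Fin M), r) false)
              ((⟨β, by omega⟩ : Fin M), r) = true := by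
            rw [Function.update_of_ne (by simp only [ne_eq, Prod.mk.injEq, Fin.mk.injEq]; rintro ⟨h, -⟩; omega)]
            exact h2
          simp only [Module.End.mul_apply, taDag, taAny, Fdis, cA, cC, lift_single', h1, h2', one_smul, map_smul, smul_smul, map_zero, smul_zero, if_true, if_false, eq_self_iff_true, Bool.true_eq_false, Bool.false_eq_true]
      · refine Or.inl ?_
        simp only [Module.End.mul_apply, taDag, taAny, Fdis, cA, cC, lift_single', h1, one_smul, map_smul, smul_smul, map_zero, smul_zero, if_true, if_false, eq_self_iff_true, Bool.true_eq_false, Bool.false_eq_true]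
    · -- mixed β = M
      have hcar : ((cartan M α β : ℤ) : ℂ) = ((cartan M α M : ℤ) : ℂ) := by rw [hb2.1]
      rw [hcar]
      refine shift_sum Finset.univ _ _ (fun r _ => diag_shift (Hg_diag α) _ (fun x => ?_))
      by_cases h1 : x.1 (⟨M - 1, by omega⟩, r) = true
      · refine Or.inr ⟨(Function.update x.1 ((⟨M - 1, by omega⟩ : Fin M), r) false,
          Function.update x.2 ((⟨0, by omega⟩ : Fin N), r)
            (x.2 ((⟨0, by omega⟩ : Fin N), r) + 1)),
          wH_EmMix hM hN α hα1 hα2 x r h1, ?_⟩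
        simp only [Module.End.mul_apply, tADag, taAny, Fdis, Gdis, cA, bC, lift_single', h1, one_smul, map_smul, smul_smul, map_zero, smul_zero, if_true, if_false, eq_self_iff_true, Bool.true_eq_false, Bool.false_eq_true]
        exact ⟨_, rfl⟩
      · refine Or.inl ?_
        simp only [Module.End.mul_apply, tADag, taAny, Fdis, Gdis, cA, bC, lift_single', h1, one_smul, map_smul, smul_smul, map_zero, smul_zero, if_true, if_false, eq_self_iff_true, Bool.true_eq_false, Bool.false_eq_true]
    · -- bosonic β
      refine shift_sum Finset.univ _ _ (fun r _ => diag_shift (Hg_diag α) _ (fun x => ?_))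
      by_cases h1 : x.2 ((⟨β - M - 1, by omega⟩ : Fin N), r) = 0
      · refine Or.inl ?_
        simp only [Module.End.mul_apply, tADag, tAAny, Gdis, bA, bC, lift_single', h1, one_smul, map_smul, smul_smul, map_zero, smul_zero, if_true, if_false, eq_self_iff_true, Bool.true_eq_false, Bool.false_eq_true]
      · refine Or.inr ⟨(x.1,
          Function.update
            (Function.update x.2 ((⟨β - M - 1, by omega⟩ : Fin N), r)
              (x.2 ((⟨β - M - 1, by omega⟩ : Fin N), r) - 1))
            ((⟨β - M, by omega⟩ : Fin N), r)
            ((Function.update x.2 ((⟨β - M - 1, by omega⟩ : Fin N), r)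
              (x.2 ((⟨β - M - 1, by omega⟩ : Fin N), r) - 1)) ((⟨β - M, by omega⟩ : Fin N), r)
                + 1)),
          wH_EmBos hM hN α β hα1 hα2 hb3.1 hb3.2 x r h1, ?_⟩
        simp only [Module.End.mul_apply, tADag, tAAny, Gdis, bA, bC, lift_single', h1, one_smul, map_smul, smul_smul, map_zero, smul_zero, if_true, if_false, eq_self_iff_true, Bool.true_eq_false, Bool.false_eq_true]
        exact ⟨_, rfl⟩
    · exfalso; omega

end Main

end
end
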